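/- arXiv:1809.02363 — 2 statements merged into one kernel-verified Lean document; each statement's English description precedes it below -/
import Mathlib

section
/- For every prime p ≥ 5, the number L^{(2)}(p) of distinct roots of ss_p^{(2)}(X) in 𝔽_p satisfies L^{(2)}(p) = N₁(p, ⌊p/4⌋) + ε. -/
open Polynomial

noncomputable section
open Finset

/-- The class number h(√-d) of the imaginary quadratic field ℚ(√-d),
realized as the subfield of ℂ generated by i·√d. -/
def classNumberSqrtNeg (d : ℕ) : ℕ :=
  haveI : FiniteDimensional ℚ (IntermediateField.adjoin ℚ {(Complex.I * Real.sqrt d : ℂ)}) :=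
    IntermediateField.adjoin.finiteDimensional
      ⟨X ^ 2 + C (d : ℚ), monic_X_pow_add_C _ (by norm_num), by
        have h : (Complex.I * (Real.sqrt d : ℂ)) ^ 2 = -(d : ℂ) := by
          rw [mul_pow, Complex.I_sq, ← Complex.ofReal_pow, Real.sq_sqrt (Nat.cast_nonneg d)]
          simp
        simp [h]⟩
  haveI : NumberField (IntermediateField.adjoin ℚ {(Complex.I * Real.sqrt d : ℂ)}) := ⟨⟩
  NumberField.classNumber (IntermediateField.adjoin ℚ {(Complex.I * Real.sqrt d : ℂ)})

variable (p : ℕ) [Fact p.Prime]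

/-- ε = (1 - (-1|p))/2 -/
def eps : ℕ := ((1 - legendreSym p (-1)) / 2).toNat
/-- δ = (1 - (-3|p))/2 -/
def del : ℕ := ((1 - legendreSym p (-3)) / 2).toNat
/-- ν = (1 - (-2|p))/2 -/
def nu : ℕ := ((1 - legendreSym p (-2)) / 2).toNat

/-- The Pochhammer symbol (x)_n = x(x+1)⋯(x+n-1) in 𝔽_p. -/
def poch (x : ZMod p) (n : ℕ) : ZMod p := (ascPochhammer (ZMod p) n).eval x

/-- The level-2 supersingular polynomial ss_p^{(2)}(X) ∈ 𝔽_p[X]: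
Σ_{n=0}^{m} ((-m)_n (3/4-ε/2)_n / (n!)²) 64^n X^{m+ε-n}, with m = ⌊p/4⌋. -/
def ss2Poly : (ZMod p)[X] :=
  ∑ n ∈ Finset.range (p / 4 + 1),
    C (poch p (-(p / 4 : ℕ) : ZMod p) n *
       poch p ((3 : ZMod p) / 4 - (eps p : ZMod p) / 2) n /
       ((n.factorial : ZMod p)) ^ 2 * 64 ^ n) *
    X ^ (p / 4 + eps p - n)

/-- L^{(2)}(p): the number of distinct roots of ss_p^{(2)}(X) in 𝔽_p. -/
def L2 : ℕ := (ss2Poly p).roots.toFinset.card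

/-- W_m(X) = Σ_{r=0}^{m} C(m,r)² X^r ∈ ℤ[X]. -/
def W (m : ℕ) : ℤ[X] := ∑ r ∈ Finset.range (m + 1), C ((m.choose r : ℤ) ^ 2) * X ^ r

/-- N₁(p,m): the number of distinct roots in 𝔽_p of W_m(X) reduced mod p. -/
def N1 (m : ℕ) : ℕ := (((W m).map (Int.castRingHom (ZMod p))).roots.toFinset.card)


lemma choose_mul_choose_symm (m r j : ℕ) :
    m.choose r * (m - r).choose j = m.choose j * (m - j).choose r := by
  rcases le_or_gt (r + j) m with h | h
  · have h1 : j ≤ m - r := by omega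
    have h2 : r ≤ m - j := by omega
    have hr : r ≤ m := by omega
    have hj : j ≤ m := by omega
    have e1 := Nat.choose_mul_factorial_mul_factorial h1
    have e2 := Nat.choose_mul_factorial_mul_factorial hr
    have e3 := Nat.choose_mul_factorial_mul_factorial h2
    have e4 := Nat.choose_mul_factorial_mul_factorial hj
    have hmm : m - r - j = m - j - r := by omega
    have key : m.choose r * (m - r).choose j * (r.factorial * j.factorial * (m - r - j).factorial)
        = m.choose j * (m - j).choose r * (r.factorial * j.factorial * (m - r - j).factorial) := by
      calc m.choose r * (m - r).choose j * (r.factorial * j.factorial * (m - r - j).factorial)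
          = m.choose r * ((m - r).choose j * j.factorial * (m - r - j).factorial) * r.factorial := by ring
        _ = m.choose r * (m - r).factorial * r.factorial := by rw [e1]
        _ = m.choose r * r.factorial * (m - r).factorial := by ring
        _ = m.factorial := e2
        _ = m.choose j * j.factorial * (m - j).factorial := e4.symm
        _ = m.choose j * ((m - j).choose r * r.factorial * (m - j - r).factorial) * j.factorial := by rw [e3]; ring
        _ = m.choose j * (m - j).choose r * (r.factorial * j.factorial * (m - r - j).factorial) := by
            rw [hmm]; ring
    exact Nat.eq_of_mul_eq_mul_right (by positivity) key
  · have L : m.choose r * (m - r).choose j = 0 := by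
      rcases le_or_gt r m with hr | hr
      · rw [Nat.choose_eq_zero_of_lt (show m - r < j by omega), mul_zero]
      · rw [Nat.choose_eq_zero_of_lt hr, zero_mul]
    have R : m.choose j * (m - j).choose r = 0 := by
      rcases le_or_gt j m with hr | hr
      · rw [Nat.choose_eq_zero_of_lt (show m - j < r by omega), mul_zero]
      · rw [Nat.choose_eq_zero_of_lt hr, zero_mul]
    rw [L, R]

lemma vandermonde_sum (m j : ℕ) (hj : j ≤ m) :
    ∑ r ∈ range (m + 1), m.choose r * (m - j).choose r = (2 * m - j).choose m := by
  have h1 : (2 * m - j).choose m = (m + (m - j)).choose (m - j) := by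
    rw [show m + (m - j) = 2 * m - j by omega,
        show m - j = (2 * m - j) - m by omega, Nat.choose_symm (by omega)]
  rw [h1, Nat.add_choose_eq, Finset.Nat.sum_antidiagonal_eq_sum_range_succ_mk]
  rw [← Finset.sum_subset (Finset.range_subset_range.mpr (by omega : m - j + 1 ≤ m + 1))
      (fun k _ hk => by
        rw [Nat.choose_eq_zero_of_lt (by simp at hk; omega : m - j < k), mul_zero])]
  apply Finset.sum_congr rfl
  intro k hk
  simp only
  rw [Nat.choose_symm (by simp at hk; omega : k ≤ m - j)]

lemma the_nat_identity (m j : ℕ) (hj : j ≤ m) :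
    ∑ r ∈ range (m + 1), m.choose r * m.choose r * (m - r).choose j
      = m.choose j * (2 * m - j).choose m := by
  have : ∀ r, m.choose r * m.choose r * (m - r).choose j
      = m.choose j * (m.choose r * (m - j).choose r) := fun r => by
    rw [mul_assoc, choose_mul_choose_symm m r j]; ring
  simp_rw [this, ← Finset.mul_sum, vandermonde_sum m j hj]

lemma T_eq_S (R : Type*) [CommRing R] (m : ℕ) (c : R) :
    ∑ r ∈ range (m + 1), C ((m.choose r : R)^2 * c^r) * (C c - X)^(m - r)
      = C ((-1 : R)^m) * ∑ n ∈ range (m + 1),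
          C ((-1 : R)^n * (m.choose n : R) * ((m + n).choose n : R) * c^n) * X^(m - n) := by
  trans (∑ j ∈ range (m + 1),
      C ((-1:R)^j * (m.choose j : R) * ((2*m - j).choose m : R) * c^(m-j)) * X^j)
  · -- LHS = M
    have expand : ∀ r ∈ range (m+1), C ((m.choose r : R)^2 * c^r) * (C c - X)^(m - r)
        = ∑ j ∈ range (m+1),
            C ((m.choose r : R)^2 * ((m-r).choose j : R) * (-1:R)^j * c^(m-j)) * X^j := by
      intro r hr
      simp only [mem_range] at hr
      have hr' : r ≤ m := by omega
      rw [sub_eq_neg_add, add_pow, Finset.mul_sum]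
      rw [Finset.sum_subset (Finset.range_subset_range.mpr (by omega : m - r + 1 ≤ m + 1))
        (fun j _ hj => by
          rw [Nat.choose_eq_zero_of_lt (by simp at hj; omega : m - r < j)]
          simp)]
      apply Finset.sum_congr rfl
      intro j hj
      simp only [mem_range] at hj
      by_cases hj' : j ≤ m - r
      swap
      · rw [Nat.choose_eq_zero_of_lt (by omega : m - r < j)]
        simp
      have hc : (C c : R[X]) ^ r * (C c) ^ (m - r - j) = (C c) ^ (m - j) := by
        rw [← pow_add]; congr 1; omega
      rw [neg_pow (X : R[X]) j]
      simp only [C_mul, C_pow, C_neg, C_1, C_eq_natCast]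
      rw [← hc]
      ring
    rw [Finset.sum_congr rfl expand, Finset.sum_comm]
    apply Finset.sum_congr rfl
    intro j hj
    simp only [mem_range] at hj
    have hj' : j ≤ m := by omega
    rw [← Finset.sum_mul, ← map_sum C]
    congr 2
    have : ∀ r ∈ range (m+1), (m.choose r : R)^2 * ((m-r).choose j : R) * (-1:R)^j * c^(m-j)
        = ((m.choose r * m.choose r * (m-r).choose j : ℕ) : R) * ((-1:R)^j * c^(m-j)) := by
      intro r _
      push_cast
      ring
    rw [Finset.sum_congr rfl this, ← Finset.sum_mul, ← Nat.cast_sum, the_nat_identity m j hj']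
    push_cast
    ring
  · -- M = RHS
    rw [Finset.mul_sum]
    have h1 : ∀ n ∈ range (m+1),
        C ((-1:R)^m) * (C ((-1:R)^n * (m.choose n : R) * ((m+n).choose n : R) * c^n) * X^(m-n))
        = (fun k => C ((-1:R)^m * ((-1:R)^k * (m.choose k : R) * ((m+k).choose k : R) * c^k)) *
            X^(m-k)) n := by
      intro n _
      simp only [← C_mul, ← mul_assoc]
    have hrefl := Finset.sum_range_reflect
      (fun k => C ((-1:R)^m * ((-1:R)^k * (m.choose k : R) * ((m+k).choose k : R) * c^k)) *
        X^(m-k)) (m+1)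
    rw [Finset.sum_congr rfl h1, ← hrefl]
    apply Finset.sum_congr rfl
    intro k hk
    simp only [mem_range] at hk
    have hk' : k ≤ m := by omega
    have e1 : m + 1 - 1 - k = m - k := by omega
    simp only [e1]
    have e2 : m - (m - k) = k := by omega
    have e3 : m.choose (m - k) = m.choose k := Nat.choose_symm hk'
    have e4 : m + (m - k) = 2 * m - k := by omega
    have e5 : (2*m - k).choose (m - k) = (2*m - k).choose m := by
      rw [show m - k = (2*m - k) - m by omega, Nat.choose_symm (by omega)]
    have e6 : (-1:R)^m * (-1:R)^(m-k) = (-1:R)^k := by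
      rw [← pow_add, show m + (m - k) = 2*(m-k) + k by omega, pow_add, pow_mul, neg_one_sq,
        one_pow, one_mul]
    rw [e2, e3, e4, e5]
    congr 2
    rw [← e6]
    ring

section AuxProof

/-- auxiliary polynomial T -/
def TT (p : ℕ) [Fact p.Prime] (m : ℕ) : (ZMod p)[X] :=
  ∑ r ∈ Finset.range (m + 1), C ((m.choose r : ZMod p)^2 * 64^r) * (C 64 - X)^(m - r)

variable (p : ℕ) [Fact p.Prime]

lemma eps_spec (hp : 5 ≤ p) : (p % 4 = 1 ∧ eps p = 0) ∨ (p % 4 = 3 ∧ eps p = 1) := by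
  have hprime : p.Prime := Fact.out
  have h2 : p ≠ 2 := by omega
  have hodd : p % 2 = 1 := Nat.odd_iff.mp (hprime.odd_of_ne_two h2)
  have hmod : p % 4 = 1 ∨ p % 4 = 3 := by omega
  rcases hmod with h | h
  · left
    refine ⟨h, ?_⟩
    unfold eps
    rw [legendreSym.at_neg_one h2, ZMod.χ₄_nat_one_mod_four h]
    norm_num
  · right
    refine ⟨h, ?_⟩
    unfold eps
    rw [legendreSym.at_neg_one h2, ZMod.χ₄_nat_three_mod_four h]
    norm_num

lemma pTwoNeZero (hp : 5 ≤ p) : (2 : ZMod p) ≠ 0 := by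
  have : ((2:ℕ) : ZMod p) ≠ 0 := by
    rw [Ne, ZMod.natCast_eq_zero_iff]
    intro h
    have := Nat.le_of_dvd (by norm_num) h
    omega
  simpa using this

lemma pFourNeZero (hp : 5 ≤ p) : (4 : ZMod p) ≠ 0 := by
  have h2 := pTwoNeZero p hp
  have : (4 : ZMod p) = 2 * 2 := by norm_num
  rw [this]
  exact mul_ne_zero h2 h2

lemma sixtyfour_ne_zero (hp : 5 ≤ p) : (64 : ZMod p) ≠ 0 := by
  have h2 := pTwoNeZero p hp
  have : (64 : ZMod p) = 2^6 := by norm_num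
  rw [this]
  exact pow_ne_zero _ h2

lemma cast_a (hp : 5 ≤ p) :
    (3 : ZMod p) / 4 - (eps p : ZMod p) / 2 = ((p / 4 + 1 : ℕ) : ZMod p) := by
  have h2 := pTwoNeZero p hp
  have h4 := pFourNeZero p hp
  have hdm := Nat.div_add_mod p 4
  rcases eps_spec p hp with ⟨h, he⟩ | ⟨h, he⟩ <;> rw [he]
  · have key : ((4 * (p / 4 + 1) : ℕ) : ZMod p) = ((p + 3 : ℕ) : ZMod p) := by
      rw [show (4 * (p/4+1) : ℕ) = p + 3 by omega]
    push_cast at key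
    rw [ZMod.natCast_self] at key
    push_cast
    field_simp
    linear_combination (-2 : ZMod p) * key
  · have key : ((4 * (p / 4 + 1) : ℕ) : ZMod p) = ((p + 1 : ℕ) : ZMod p) := by
      rw [show (4 * (p/4+1) : ℕ) = p + 1 by omega]
    push_cast at key
    rw [ZMod.natCast_self] at key
    push_cast
    field_simp
    linear_combination (-2 : ZMod p) * key

lemma fac_ne_zero (hp : 5 ≤ p) {n : ℕ} (hn : n < p) : ((n.factorial : ℕ) : ZMod p) ≠ 0 := by
  rw [Ne, ZMod.natCast_eq_zero_iff]
  intro hdvd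
  have := ((Nat.Prime.dvd_factorial (Fact.out : p.Prime)).mp hdvd)
  omega

lemma coeff_eq (hp : 5 ≤ p) (n : ℕ) (hn : n ≤ p / 4) :
    poch p (-(p / 4 : ℕ) : ZMod p) n * poch p (((p / 4 + 1 : ℕ) : ZMod p)) n /
      ((n.factorial : ZMod p)) ^ 2 * 64 ^ n
    = (-1 : ZMod p)^n * ((p/4).choose n : ZMod p) * ((p/4 + n).choose n : ZMod p) * 64^n := by
  have hmp : p / 4 < p := Nat.div_lt_self (by omega) (by omega)
  have hfac : ((n.factorial : ℕ) : ZMod p) ≠ 0 := fac_ne_zero p hp (by omega)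
  have h1 : poch p (-(p/4 : ℕ) : ZMod p) n
      = (-1 : ZMod p)^n * (((p/4).descFactorial n : ℕ) : ZMod p) := by
    unfold poch
    rw [ascPochhammer_eval_neg_eq_descPochhammer, descPochhammer_eval_eq_descFactorial]
  have h2 : poch p (((p/4 + 1 : ℕ) : ZMod p)) n = (((p/4 + 1).ascFactorial n : ℕ) : ZMod p) := by
    unfold poch
    rw [← ascPochhammer_eval_cast, ascPochhammer_nat_eq_ascFactorial]
  rw [h1, h2, Nat.descFactorial_eq_factorial_mul_choose, Nat.ascFactorial_eq_factorial_mul_choose]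
  push_cast
  field_simp

lemma ss2_eq (hp : 5 ≤ p) :
    ss2Poly p = C ((-1 : ZMod p)^(p/4)) * (X ^ eps p * TT p (p/4)) := by
  unfold ss2Poly
  rw [cast_a p hp]
  have step : ∀ n ∈ range (p/4 + 1),
      C (poch p (-(p/4 : ℕ) : ZMod p) n * poch p (((p/4 + 1 : ℕ) : ZMod p)) n /
          ((n.factorial : ZMod p)) ^ 2 * 64 ^ n) * X ^ (p/4 + eps p - n)
      = X ^ eps p * (C ((-1 : ZMod p)^n * ((p/4).choose n : ZMod p) *
          ((p/4 + n).choose n : ZMod p) * 64^n) * X^(p/4 - n)) := by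
    intro n hn
    simp only [mem_range] at hn
    rw [coeff_eq p hp n (by omega)]
    rw [show p/4 + eps p - n = eps p + (p/4 - n) by omega, pow_add]
    ring
  rw [Finset.sum_congr rfl step, ← Finset.mul_sum]
  unfold TT
  rw [T_eq_S (ZMod p) (p/4) 64]
  have h : ((-1 : ZMod p)^(p/4)) * ((-1 : ZMod p)^(p/4)) = 1 := by
    rw [← pow_add, ← two_mul, pow_mul, neg_one_sq, one_pow]
  rw [show (C ((-1 : ZMod p)^(p/4))) * (X ^ eps p * (C ((-1 : ZMod p)^(p/4)) *
      ∑ n ∈ range (p/4 + 1), C ((-1 : ZMod p)^n * ((p/4).choose n : ZMod p) *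
        ((p/4 + n).choose n : ZMod p) * (64:ZMod p)^n) * X^(p/4 - n)))
    = (C ((-1 : ZMod p)^(p/4)) * C ((-1 : ZMod p)^(p/4))) * (X ^ eps p *
      ∑ n ∈ range (p/4 + 1), C ((-1 : ZMod p)^n * ((p/4).choose n : ZMod p) *
        ((p/4 + n).choose n : ZMod p) * (64:ZMod p)^n) * X^(p/4 - n)) from by ring,
    ← C_mul, h, C_1, one_mul]

lemma TT_eval_64 (m : ℕ) : (TT p m).eval 64 = 64^m := by
  unfold TT
  rw [eval_finset_sum]
  rw [Finset.sum_eq_single m]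
  · simp [Nat.choose_self]
  · intro r hr hrm
    simp only [mem_range] at hr
    simp only [eval_mul, eval_pow, eval_sub, eval_C, eval_X]
    rw [sub_self, zero_pow (by omega : m - r ≠ 0), mul_zero]
  · intro h
    simp at h

lemma Wp_eq (m : ℕ) : (W m).map (Int.castRingHom (ZMod p))
    = ∑ r ∈ range (m + 1), C ((m.choose r : ZMod p)^2) * X^r := by
  unfold W
  rw [Polynomial.map_sum]
  apply Finset.sum_congr rfl
  intro r _
  rw [Polynomial.map_mul, Polynomial.map_pow, map_C, map_X]
  congr 1
  simp

lemma TT_eval_rel (m : ℕ) (x : ZMod p) (hx : (64 : ZMod p) - x ≠ 0) :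
    (TT p m).eval x
      = (64 - x)^m * ((W m).map (Int.castRingHom (ZMod p))).eval (64 * (64 - x)⁻¹) := by
  rw [Wp_eq]
  unfold TT
  rw [eval_finset_sum, eval_finset_sum, Finset.mul_sum]
  apply Finset.sum_congr rfl
  intro r hr
  simp only [mem_range] at hr
  simp only [eval_mul, eval_pow, eval_sub, eval_C, eval_X]
  have hsplit : ((64 : ZMod p) - x)^m = (64-x)^(m-r) * (64-x)^r := by
    rw [← pow_add]
    congr 1
    omega
  rw [hsplit]
  field_simp
  have hxr : ((64:ZMod p) - x)⁻¹ ^ r * (64 - x) ^ r = 1 := by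
    rw [← mul_pow, inv_mul_cancel₀ hx, one_pow]
  linear_combination (-(((m.choose r : ℕ) : ZMod p) ^ 2 * 64 ^ r)) * hxr

end AuxProof

/-- For every prime p ≥ 5, the number L^{(2)}(p) of distinct roots of ss_p^{(2)}(X) in 𝔽_p
satisfies L^{(2)}(p) = N₁(p, ⌊p/4⌋) + ε. -/
theorem L2_eq_N1_add_eps (hp : 5 ≤ p) :
    L2 p = N1 p (p / 4) + eps p := by
  classical
  unfold L2 N1
  have hprime : p.Prime := Fact.out
  have hdm := Nat.div_add_mod p 4
  set m := p / 4 with hm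
  have hm1 : 1 ≤ m := by omega
  have h64 : (64 : ZMod p) ≠ 0 := sixtyfour_ne_zero p hp
  have hT64 : (TT p m).eval 64 = 64^m := TT_eval_64 p m
  have hT64ne : (TT p m).eval 64 ≠ 0 := by
    rw [hT64]; exact pow_ne_zero _ h64
  have hTne : TT p m ≠ 0 := by
    intro h
    rw [h] at hT64ne
    simp at hT64ne
  set Wp := (W m).map (Int.castRingHom (ZMod p)) with hWpdef
  have hW0 : Wp.eval 0 = 1 := by
    rw [hWpdef, Wp_eq, eval_finset_sum, Finset.sum_eq_single 0]
    · simp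
    · intro r hr hrne
      simp [zero_pow hrne]
    · intro h
      simp at h
  have hWne : Wp ≠ 0 := by
    intro h
    rw [h] at hW0
    simp at hW0
  have hW1 : Wp.eval 1 = (((2*m).choose m : ℕ) : ZMod p) := by
    rw [hWpdef, Wp_eq, eval_finset_sum]
    have : ∀ r ∈ range (m+1), (C ((m.choose r : ZMod p)^2) * X^r).eval 1
        = ((m.choose r * (m - 0).choose r : ℕ) : ZMod p) := by
      intro r _
      simp [sq]
    rw [Finset.sum_congr rfl this, ← Nat.cast_sum, vandermonde_sum m 0 (by omega)]
    norm_num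
  have hW1ne : Wp.eval 1 ≠ 0 := by
    rw [hW1, Ne, ZMod.natCast_eq_zero_iff]
    intro hdvd
    have hfacteq : (2*m).choose m * m.factorial * m.factorial = (2*m).factorial := by
      have h := Nat.choose_mul_factorial_mul_factorial (by omega : m ≤ 2*m)
      rw [show 2*m - m = m by omega] at h
      exact h
    have hdvd' : p ∣ (2*m).factorial := by
      rw [← hfacteq]
      exact (hdvd.mul_right _).mul_right _
    have := (Nat.Prime.dvd_factorial hprime).mp hdvd'
    omega
  have hT0ne : (TT p m).eval 0 ≠ 0 := by
    rw [TT_eval_rel p m 0 (by simpa using h64)]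
    have : (64 : ZMod p) * ((64 : ZMod p) - 0)⁻¹ = 1 := by
      rw [sub_zero]
      field_simp
    rw [this]
    exact mul_ne_zero (pow_ne_zero _ (by simpa using h64)) hW1ne
  have rootT_ne : ∀ x ∈ (TT p m).roots.toFinset, (64 : ZMod p) - x ≠ 0 := by
    intro x hx hc
    rw [Multiset.mem_toFinset, mem_roots hTne] at hx
    have hx64 : x = 64 := by linear_combination -hc
    rw [hx64] at hx
    exact hT64ne hx
  have rootW_ne : ∀ y ∈ Wp.roots.toFinset, y ≠ 0 := by
    intro y hy hc
    rw [Multiset.mem_toFinset, mem_roots hWne] at hy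
    rw [hc] at hy
    have : Wp.eval 0 = 0 := hy
    rw [hW0] at this
    exact one_ne_zero this
  have hcard : (TT p m).roots.toFinset.card = Wp.roots.toFinset.card := by
    apply Finset.card_nbij' (fun x => 64 * (64 - x)⁻¹) (fun y => 64 - 64 * y⁻¹)
    · intro x hx
      have hx64 := rootT_ne x hx
      rw [Finset.mem_coe, Multiset.mem_toFinset, mem_roots hTne] at hx
      rw [Finset.mem_coe, Multiset.mem_toFinset, mem_roots hWne]
      have hx' : (TT p m).eval x = 0 := hx
      have hrel := TT_eval_rel p m x hx64
      rw [← hWpdef, hx'] at hrel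
      rcases mul_eq_zero.mp hrel.symm with h | h
      · exact absurd ((pow_eq_zero_iff (by omega : m ≠ 0)).mp h) hx64
      · exact h
    · intro y hy
      have hy0 := rootW_ne y hy
      rw [Finset.mem_coe, Multiset.mem_toFinset, mem_roots hWne] at hy
      rw [Finset.mem_coe, Multiset.mem_toFinset, mem_roots hTne]
      have hy' : Wp.eval y = 0 := hy
      have hsub : (64 : ZMod p) - (64 - 64 * y⁻¹) = 64 * y⁻¹ := by ring
      have hne : (64 : ZMod p) - (64 - 64 * y⁻¹) ≠ 0 := by
        rw [hsub]; exact mul_ne_zero h64 (inv_ne_zero hy0)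
      show (TT p m).eval _ = 0
      rw [TT_eval_rel p m _ hne, ← hWpdef, hsub]
      have harg : (64 : ZMod p) * (64 * y⁻¹)⁻¹ = y := by
        field_simp
      rw [harg, hy', mul_zero]
    · intro x hx
      have hx64 := rootT_ne x hx
      field_simp
      ring
    · intro y hy
      have hy0 := rootW_ne y hy
      field_simp
      ring
  have hroots : (ss2Poly p).roots = eps p • ({0} : Multiset (ZMod p)) + (TT p m).roots := by
    rw [ss2_eq p hp, ← hm]
    rw [roots_C_mul _ (pow_ne_zero _ (neg_ne_zero.mpr (one_ne_zero)))]
    rw [roots_mul (mul_ne_zero (pow_ne_zero _ X_ne_zero) hTne), roots_X_pow]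
  have h0T : (0 : ZMod p) ∉ (TT p m).roots.toFinset := by
    intro h
    rw [Multiset.mem_toFinset, mem_roots hTne] at h
    exact hT0ne h
  rw [hroots, Multiset.toFinset_add]
  rcases eps_spec p hp with ⟨h4, he⟩ | ⟨h4, he⟩ <;> rw [he]
  · simp only [zero_smul, Multiset.toFinset_zero, Finset.empty_union, add_zero]
    exact hcard
  · simp only [one_smul]
    rw [show ({0} : Multiset (ZMod p)).toFinset = {0} from by simp, ← Finset.insert_eq,
      Finset.card_insert_of_notMem h0T, hcard]
end
end

section
/- For every prime p ≥ 5, ss_p^{(2)}(X) = Σ_{n=0}^{(p−1+2ε)/4} C(2n,n)·C(4n,2n)·X^{(p−1+2ε)/4 − n} as polynomials in 𝔽_p[X] (the binomial coefficients being reduced mod p). -/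
open Polynomial

noncomputable section

variable (p : ℕ) [Fact p.Prime]

section Aux

/-- Integer identity: ∏_{k<n}(4k+1)(4k+3) · 4^n · (2n)! = (4n)!. -/
lemma prod_odd_factorial (n : ℕ) :
    (∏ k ∈ Finset.range n, (4*k+1)*(4*k+3)) * (4^n * (2*n).factorial)
      = (4*n).factorial := by
  induction n with
  | zero => simp
  | succ n ih =>
    have h2 : 2*(n+1) = (2*n)+1+1 := by ring
    have h4 : 4*(n+1) = (4*n)+1+1+1+1 := by ring
    rw [Finset.prod_range_succ, h2, h4, Nat.factorial_succ, Nat.factorial_succ,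
      Nat.factorial_succ, Nat.factorial_succ, Nat.factorial_succ, Nat.factorial_succ, ← ih]
    ring

lemma choose_mul_choose (n : ℕ) :
    (2*n).choose n * (4*n).choose (2*n) * ((2*n).factorial * (n.factorial * n.factorial))
      = (4*n).factorial := by
  have e1 : (2*n).choose n * n.factorial * n.factorial = (2*n).factorial := by
    have := Nat.choose_mul_factorial_mul_factorial (show n ≤ 2*n by omega)
    simpa [show 2*n - n = n by omega] using this
  have e2 : (4*n).choose (2*n) * (2*n).factorial * (2*n).factorial = (4*n).factorial := by
    have := Nat.choose_mul_factorial_mul_factorial (show 2*n ≤ 4*n by omega)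
    simpa [show 4*n - 2*n = 2*n by omega] using this
  rw [← e2, ← e1]; ring

lemma poch_eq_prod (x : ZMod p) (n : ℕ) :
    poch p x n = ∏ k ∈ Finset.range n, (x + k) := by
  induction n with
  | zero => simp [poch]
  | succ n ih =>
    rw [poch, ascPochhammer_succ_eval, ← poch, ih, Finset.prod_range_succ]

lemma coeff_key (hp : 5 ≤ p) {n : ℕ} (hn : 2*n < p) :
    poch p ((1 : ZMod p)/4) n * poch p ((3 : ZMod p)/4) n / ((n.factorial : ZMod p)) ^ 2 * 64 ^ n
      = (((2*n).choose n : ℕ) : ZMod p) * (((4*n).choose (2*n) : ℕ) : ZMod p) := by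
  have hprime : p.Prime := Fact.out
  have h4 : (4 : ZMod p) ≠ 0 := by
    have : ((4 : ℕ) : ZMod p) ≠ 0 := by
      rw [Ne, ZMod.natCast_eq_zero_iff]
      intro h
      have := Nat.le_of_dvd (by norm_num) h
      omega
    simpa using this
  have hfacn : ((n.factorial : ℕ) : ZMod p) ≠ 0 := by
    rw [Ne, ZMod.natCast_eq_zero_iff]
    intro h
    have := hprime.dvd_factorial.mp h
    omega
  have hfac2n : (((2*n).factorial : ℕ) : ZMod p) ≠ 0 := by
    rw [Ne, ZMod.natCast_eq_zero_iff]
    intro h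
    have := hprime.dvd_factorial.mp h
    omega
  have hcast := congrArg (fun k : ℕ => (k : ZMod p)) (prod_odd_factorial n)
  push_cast at hcast
  have hprod : poch p ((1 : ZMod p)/4) n * poch p ((3 : ZMod p)/4) n * 16 ^ n
      = ∏ k ∈ Finset.range n, ((4*(k:ZMod p)+1) * (4*(k:ZMod p)+3)) := by
    have h16 : (16 : ZMod p)^n = ∏ _k ∈ Finset.range n, (16 : ZMod p) := by simp
    rw [poch_eq_prod, poch_eq_prod, h16, ← Finset.prod_mul_distrib, ← Finset.prod_mul_distrib]
    refine Finset.prod_congr rfl fun k _ => ?_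
    field_simp
    ring
  have h64 : (64 : ZMod p)^n = 16^n * 4^n := by rw [← mul_pow]; norm_num
  -- key product identity in ZMod p
  have hK : poch p ((1 : ZMod p)/4) n * poch p ((3 : ZMod p)/4) n * (64 ^ n * ((2*n).factorial : ZMod p))
      = (((4*n).factorial : ℕ) : ZMod p) := by
    calc poch p ((1 : ZMod p)/4) n * poch p ((3 : ZMod p)/4) n * (64 ^ n * ((2*n).factorial : ZMod p))
        = poch p ((1 : ZMod p)/4) n * poch p ((3 : ZMod p)/4) n * 16 ^ n
            * (4 ^ n * ((2*n).factorial : ZMod p)) := by rw [h64]; push_cast; ring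
      _ = (∏ k ∈ Finset.range n, ((4*(k:ZMod p)+1) * (4*(k:ZMod p)+3)))
            * (4 ^ n * ((2*n).factorial : ZMod p)) := by rw [hprod]
      _ = (((4*n).factorial : ℕ) : ZMod p) := by push_cast; exact hcast
  -- conclude
  have key2 : poch p ((1 : ZMod p)/4) n * poch p ((3 : ZMod p)/4) n * 64 ^ n
      = (((2*n).choose n : ℕ) : ZMod p) * (((4*n).choose (2*n) : ℕ) : ZMod p)
        * ((n.factorial : ZMod p))^2 := by
    have hc := congrArg (fun k : ℕ => (k : ZMod p)) (choose_mul_choose n)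
    push_cast at hc
    apply mul_right_cancel₀ hfac2n
    push_cast
    rw [show poch p ((1 : ZMod p)/4) n * poch p ((3 : ZMod p)/4) n * 64 ^ n * ((2*n).factorial : ZMod p)
        = poch p ((1 : ZMod p)/4) n * poch p ((3 : ZMod p)/4) n * (64 ^ n * ((2*n).factorial : ZMod p)) from by ring,
      hK]
    push_cast
    rw [← hc]; ring
  field_simp
  linear_combination key2

end Aux

/-- For every prime p ≥ 5,
ss_p^{(2)}(X) = Σ_{n=0}^{(p−1+2ε)/4} C(2n,n)·C(4n,2n)·X^{(p−1+2ε)/4 − n} in 𝔽_p[X]. -/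
theorem ss2_explicit (hp : 5 ≤ p) :
    ss2Poly p =
      ∑ n ∈ Finset.range ((p - 1 + 2 * eps p) / 4 + 1),
        C ((((2 * n).choose n : ℕ) : ZMod p) * (((4 * n).choose (2 * n) : ℕ) : ZMod p)) *
          X ^ ((p - 1 + 2 * eps p) / 4 - n) := by
  have hprime : p.Prime := Fact.out
  have hodd : p % 2 = 1 := Nat.odd_iff.mp (hprime.odd_of_ne_two (by omega))
  have hmod : p % 4 = 1 ∨ p % 4 = 3 := by omega
  have h4 : (4 : ZMod p) ≠ 0 := by
    have : ((4 : ℕ) : ZMod p) ≠ 0 := by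
      rw [Ne, ZMod.natCast_eq_zero_iff]
      intro h
      have := Nat.le_of_dvd (by norm_num) h
      omega
    simpa using this
  have h2 : (2 : ZMod p) ≠ 0 := by
    have : ((2 : ℕ) : ZMod p) ≠ 0 := by
      rw [Ne, ZMod.natCast_eq_zero_iff]
      intro h
      have := Nat.le_of_dvd (by norm_num) h
      omega
    simpa using this
  have heps : eps p = if p % 4 = 1 then 0 else 1 := by
    rw [eps, legendreSym.at_neg_one (by omega : p ≠ 2), ZMod.χ₄_nat_eq_if_mod_four]
    rcases hmod with h | h <;> simp [h, hodd] <;> omega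
  rcases hmod with h1 | h3
  · -- p ≡ 1 (mod 4)
    have he : eps p = 0 := by rw [heps]; simp [h1]
    have hE : (p - 1 + 2 * 0) / 4 = p / 4 := by omega
    have hz : (4 : ZMod p) * ((p/4 : ℕ) : ZMod p) + 1 = 0 := by
      have hps : ((4*(p/4)+1 : ℕ) : ZMod p) = 0 := by
        rw [(by omega : 4*(p/4)+1 = p)]; exact ZMod.natCast_self p
      push_cast at hps
      exact hps
    have ha : (-((p / 4 : ℕ) : ZMod p)) = (1 : ZMod p)/4 := by
      field_simp
      linear_combination -hz
    simp only [ss2Poly, he, hE, Nat.add_zero]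
    refine Finset.sum_congr rfl fun n hn => ?_
    have hn' : n ≤ p / 4 := by
      have := Finset.mem_range.mp hn; omega
    have h2n : 2 * n < p := by omega
    have hb : (3 : ZMod p)/4 - ((0:ℕ) : ZMod p)/2 = (3 : ZMod p)/4 := by norm_num
    rw [ha, hb]
    exact congrArg (· * X ^ (p / 4 - n)) (congrArg C (coeff_key p hp h2n))
  · -- p ≡ 3 (mod 4)
    have he : eps p = 1 := by rw [heps, if_neg (by omega)]
    have hE : (p - 1 + 2 * 1) / 4 = p / 4 + 1 := by omega
    have hz : (4 : ZMod p) * ((p/4 : ℕ) : ZMod p) + 3 = 0 := by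
      have hps : ((4*(p/4)+3 : ℕ) : ZMod p) = 0 := by
        rw [(by omega : 4*(p/4)+3 = p)]; exact ZMod.natCast_self p
      push_cast at hps
      exact hps
    have ha : (-((p / 4 : ℕ) : ZMod p)) = (3 : ZMod p)/4 := by
      field_simp
      linear_combination -hz
    have hb : (3 : ZMod p)/4 - ((1:ℕ) : ZMod p)/2 = (1 : ZMod p)/4 := by
      push_cast
      field_simp
      ring
    simp only [ss2Poly, he, hE]
    conv_rhs => rw [Finset.sum_range_succ]
    have hvanish : (((4*(p/4+1)).choose (2*(p/4+1)) : ℕ) : ZMod p) = 0 := by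
      rw [ZMod.natCast_eq_zero_iff]
      exact Nat.Prime.dvd_choose hprime (by omega) (by omega) (by omega)
    rw [hvanish, mul_zero, map_zero, zero_mul, add_zero]
    refine Finset.sum_congr rfl fun n hn => ?_
    have hn' : n ≤ p / 4 := by
      have := Finset.mem_range.mp hn; omega
    have h2n : 2 * n < p := by omega
    rw [ha, hb, mul_comm (poch p ((3 : ZMod p)/4) n)]
    exact congrArg (· * X ^ (p / 4 + 1 - n)) (congrArg C (coeff_key p hp h2n))
end
end
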